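/- arXiv:1503.02331 — 5 statements merged into one kernel-verified Lean document; each statement's English description precedes it below -/
import Mathlib

section
/- For every t ∈ ℝ one has log ω_t = log ω + e^{-itH}·(∫₀^t σ_s ds)·e^{itH}; equivalently, for every t ≠ 0, log ω_t = log ω + t·τ^{-t}(Σ^t). (Here log ω_t is the functional-calculus logarithm of the positive-definite matrix ω_t.) -/
open Matrix MeasureTheory Filter Topology
open scoped ComplexOrder

/-- Functional calculus for a Hermitian complex matrix: apply `f : ℝ → ℝ` to the eigenvalues
(junk value `0` if the matrix is not Hermitian). -/
noncomputable def matCFC {n : ℕ} (f : ℝ → ℝ) (A : Matrix (Fin n) (Fin n) ℂ) :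
    Matrix (Fin n) (Fin n) ℂ :=
  if h : A.IsHermitian then h.cfc f else 0

/-- Functional-calculus logarithm of a (positive-definite Hermitian) matrix. -/
noncomputable def mlog {n : ℕ} (A : Matrix (Fin n) (Fin n) ℂ) : Matrix (Fin n) (Fin n) ℂ :=
  matCFC Real.log A

/-- Functional-calculus real power of a (positive-definite Hermitian) matrix. -/
noncomputable def mpow {n : ℕ} (A : Matrix (Fin n) (Fin n) ℂ) (q : ℝ) :
    Matrix (Fin n) (Fin n) ℂ :=
  matCFC (fun x => x ^ q) A

/-- Matrix exponential. -/
noncomputable def mexp {n : ℕ} (A : Matrix (Fin n) (Fin n) ℂ) : Matrix (Fin n) (Fin n) ℂ :=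
  NormedSpace.exp A

/-- Heisenberg evolution `τ^t(A) = e^{itH} A e^{-itH}`. -/
noncomputable def heisenberg {n : ℕ} (H : Matrix (Fin n) (Fin n) ℂ) (t : ℝ)
    (A : Matrix (Fin n) (Fin n) ℂ) : Matrix (Fin n) (Fin n) ℂ :=
  mexp ((Complex.I * t) • H) * A * mexp ((-(Complex.I * t)) • H)

/-- Schrödinger evolution of the state, `ω_t = e^{-itH} ω e^{itH}`. -/
noncomputable def stateT {n : ℕ} (H ω : Matrix (Fin n) (Fin n) ℂ) (t : ℝ) :
    Matrix (Fin n) (Fin n) ℂ :=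
  mexp ((-(Complex.I * t)) • H) * ω * mexp ((Complex.I * t) • H)

/-- Entropy production observable `σ = -i (H log ω - log ω H)`. -/
noncomputable def entropyProd {n : ℕ} (H ω : Matrix (Fin n) (Fin n) ℂ) :
    Matrix (Fin n) (Fin n) ℂ :=
  (-Complex.I) • (H * mlog ω - mlog ω * H)

/-- `σ_s = τ^s(σ)`. -/
noncomputable def sigmaAt {n : ℕ} (H ω : Matrix (Fin n) (Fin n) ℂ) (s : ℝ) :
    Matrix (Fin n) (Fin n) ℂ :=
  heisenberg H s (entropyProd H ω)

/-- `∫₀^t σ_s ds` (entrywise integral). -/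
noncomputable def intSigma {n : ℕ} (H ω : Matrix (Fin n) (Fin n) ℂ) (t : ℝ) :
    Matrix (Fin n) (Fin n) ℂ :=
  Matrix.of fun i j => ∫ s in (0:ℝ)..t, sigmaAt H ω s i j

/-- Mean entropy production rate `Σ^t = (1/t) ∫₀^t σ_s ds`. -/
noncomputable def meanSigma {n : ℕ} (H ω : Matrix (Fin n) (Fin n) ℂ) (t : ℝ) :
    Matrix (Fin n) (Fin n) ℂ :=
  ((t : ℂ)⁻¹) • intSigma H ω t

/-- The Evans–Searles functional `ES_t(α) = log tr(ω e^{-α ∫₀^t σ_s ds})`. -/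
noncomputable def ES {n : ℕ} (H ω : Matrix (Fin n) (Fin n) ℂ) (t α : ℝ) : ℝ :=
  Real.log ((Matrix.trace (ω * mexp ((-α) • intSigma H ω t))).re)

/-- The entropic pressure functional `e_{p,t}(α)` for `0 < p < ∞`. -/
noncomputable def ePressure {n : ℕ} (H ω : Matrix (Fin n) (Fin n) ℂ) (p t α : ℝ) : ℝ :=
  Real.log ((Matrix.trace (mpow
    (mpow ω ((1 - α)/p) * mpow (stateT H ω t) (2*α/p) * mpow ω ((1 - α)/p)) (p/2))).re)

/-- The entropic pressure functional `e_{∞,t}(α)`. -/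
noncomputable def ePressureInf {n : ℕ} (H ω : Matrix (Fin n) (Fin n) ℂ) (t α : ℝ) : ℝ :=
  Real.log ((Matrix.trace (mexp ((1 - α) • mlog ω + α • mlog (stateT H ω t)))).re)

/-! Conjugation by the unitary `e^{itH}` is a ⋆-automorphism of the matrix algebra, so it commutes
with the functional calculus: `log ω_t = τ^{-t}(log ω)`. On the other hand
`d/ds τ^s(log ω) = τ^s(i[H, log ω]) = -σ_s`, so `∫₀^t σ_s ds = log ω - τ^t(log ω)`, and applying
`τ^{-t}` gives the identity. -/

section

variable {n : ℕ}

lemma matCFC_eq_cfc (f : ℝ → ℝ) {A : Matrix (Fin n) (Fin n) ℂ} (hA : A.IsHermitian) :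
    matCFC f A = cfc f A := by
  rw [matCFC, dif_pos hA, hA.cfc_eq]

lemma matCFC_unitary_conj (f : ℝ → ℝ) {U : Matrix (Fin n) (Fin n) ℂ}
    (hU : U ∈ unitary (Matrix (Fin n) (Fin n) ℂ)) (A : Matrix (Fin n) (Fin n) ℂ) :
    matCFC f (U * A * star U) = U * matCFC f A * star U := by
  let φ := Unitary.conjStarAlgAut ℂ (Matrix (Fin n) (Fin n) ℂ) ⟨U, hU⟩
  have hφ : ∀ B, U * B * star U = φ B := fun _ => rfl
  have hφ_cont : Continuous φ := by
    change Continuous fun B => U * B * star U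
    fun_prop
  by_cases hA : A.IsHermitian
  · have hφA : (φ A).IsHermitian := hA.isSelfAdjoint.map φ
    rw [hφ, hφ, matCFC_eq_cfc f hφA, matCFC_eq_cfc f hA]
    exact (StarAlgHomClass.map_cfc φ f A (A.finite_real_spectrum.continuousOn f) hφ_cont
      hA.isSelfAdjoint hφA.isSelfAdjoint).symm
  · have hφA : ¬ (φ A).IsHermitian := fun h =>
      hA (by simpa using (IsSelfAdjoint.map h.isSelfAdjoint φ.symm).isHermitian)
    rw [hφ, matCFC, matCFC, dif_neg hA, dif_neg hφA, mul_zero, zero_mul]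

lemma mexp_smul_mul_mexp_smul (H : Matrix (Fin n) (Fin n) ℂ) (a b : ℂ) :
    mexp (a • H) * mexp (b • H) = mexp ((a + b) • H) := by
  rw [mexp, mexp, mexp, add_smul,
    Matrix.exp_add_of_commute _ _ (((Commute.refl H).smul_left a).smul_right b)]

lemma star_mexp_smul {H : Matrix (Fin n) (Fin n) ℂ} (hH : H.IsHermitian) (t : ℝ) :
    star (mexp ((Complex.I * t) • H)) = mexp ((-(Complex.I * t)) • H) := by
  rw [mexp, mexp, Matrix.star_eq_conjTranspose, ← Matrix.exp_conjTranspose, conjTranspose_smul,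
    hH.eq]
  simp [Complex.conj_ofReal]

lemma mexp_smul_mem_unitary {H : Matrix (Fin n) (Fin n) ℂ} (hH : H.IsHermitian) (t : ℝ) :
    mexp ((Complex.I * t) • H) ∈ unitary (Matrix (Fin n) (Fin n) ℂ) := by
  rw [Unitary.mem_iff, star_mexp_smul hH, mexp_smul_mul_mexp_smul, mexp_smul_mul_mexp_smul,
    neg_add_cancel, add_neg_cancel, zero_smul, mexp, NormedSpace.exp_zero]
  exact ⟨rfl, rfl⟩

lemma heisenberg_zero (H A : Matrix (Fin n) (Fin n) ℂ) : heisenberg H 0 A = A := by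
  simp [heisenberg, mexp, NormedSpace.exp_zero]

lemma heisenberg_heisenberg (H A : Matrix (Fin n) (Fin n) ℂ) (s t : ℝ) :
    heisenberg H s (heisenberg H t A) = heisenberg H (s + t) A := by
  simp only [heisenberg, ← mul_assoc]
  rw [mexp_smul_mul_mexp_smul, mul_assoc _ _ (mexp _), mexp_smul_mul_mexp_smul]
  push_cast
  ring_nf

lemma heisenberg_neg (H A : Matrix (Fin n) (Fin n) ℂ) (t : ℝ) :
    heisenberg H (-t) A = mexp ((-(Complex.I * t)) • H) * A * mexp ((Complex.I * t) • H) := by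
  simp [heisenberg]

lemma heisenberg_sub (H A B : Matrix (Fin n) (Fin n) ℂ) (t : ℝ) :
    heisenberg H t (A - B) = heisenberg H t A - heisenberg H t B := by
  simp only [heisenberg, mul_sub, sub_mul]

lemma heisenberg_smul (H A : Matrix (Fin n) (Fin n) ℂ) (c : ℂ) (t : ℝ) :
    heisenberg H t (c • A) = c • heisenberg H t A := by
  simp only [heisenberg, mul_smul_comm, smul_mul_assoc]

lemma stateT_eq_heisenberg (H ω : Matrix (Fin n) (Fin n) ℂ) (t : ℝ) :
    stateT H ω t = heisenberg H (-t) ω :=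
  (heisenberg_neg H ω t).symm

lemma mlog_heisenberg {H : Matrix (Fin n) (Fin n) ℂ} (hH : H.IsHermitian) (t : ℝ)
    (A : Matrix (Fin n) (Fin n) ℂ) : mlog (heisenberg H t A) = heisenberg H t (mlog A) := by
  rw [heisenberg, heisenberg, ← star_mexp_smul hH]
  exact matCFC_unitary_conj Real.log (mexp_smul_mem_unitary hH t) A

lemma hasDerivAt_exp_smul_conj {𝔸 : Type*} [NormedRing 𝔸] [NormedAlgebra ℝ 𝔸]
    [CompleteSpace 𝔸] (K A : 𝔸) (s : ℝ) :
    HasDerivAt (fun u : ℝ => NormedSpace.exp (u • K) * A * NormedSpace.exp (u • -K))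
      (NormedSpace.exp (s • K) * (K * A - A * K) * NormedSpace.exp (s • -K)) s := by
  refine (((hasDerivAt_exp_smul_const' K s).mul_const A).mul
    (hasDerivAt_exp_smul_const (-K) s)).congr_deriv ?_
  have hK : ∀ L : 𝔸, Commute L K → Commute K (NormedSpace.exp (s • L)) := fun L h =>
    (h.symm.smul_right s).exp_right
  rw [(hK K (.refl K)).eq, mul_neg, ← (hK (-K) (Commute.neg_left (.refl K))).eq]
  noncomm_ring

section Calculus

attribute [local instance] Matrix.linftyOpNormedAddCommGroup Matrix.linftyOpNormedRing
  Matrix.linftyOpNormedSpace Matrix.linftyOpNormedAlgebra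

lemma hasDerivAt_heisenberg (H A : Matrix (Fin n) (Fin n) ℂ) (s : ℝ) :
    HasDerivAt (fun u : ℝ => heisenberg H u A)
      (heisenberg H s (Complex.I • (H * A - A * H))) s := by
  have hexp (c : ℂ) (u : ℝ) : mexp ((c * u) • H) = NormedSpace.exp (u • c • H) := by
    rw [mexp, mul_comm, mul_smul, Complex.coe_smul]
  have h := hasDerivAt_exp_smul_conj (Complex.I • H) A s
  simp only [← neg_smul, heisenberg, ← neg_mul, hexp] at h ⊢
  refine h.congr_deriv ?_
  rw [smul_sub, smul_mul_assoc, mul_smul_comm]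
  rfl

lemma continuous_heisenberg (H A : Matrix (Fin n) (Fin n) ℂ) :
    Continuous fun s : ℝ => heisenberg H s A :=
  continuous_iff_continuousAt.mpr fun s => (hasDerivAt_heisenberg H A s).continuousAt

lemma hasDerivAt_heisenberg_mlog (H ω : Matrix (Fin n) (Fin n) ℂ) (s : ℝ) :
    HasDerivAt (fun u : ℝ => heisenberg H u (mlog ω)) (-sigmaAt H ω s) s := by
  rw [sigmaAt, entropyProd, heisenberg_smul, neg_smul, neg_neg, ← heisenberg_smul]
  exact hasDerivAt_heisenberg H (mlog ω) s

lemma intervalIntegral_apply_eq_sub {l m : Type*} [Fintype l] [Fintype m]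
    {F F' : ℝ → Matrix l m ℂ}
    (hF : ∀ s, HasDerivAt F (F' s) s) (hF' : Continuous F') (i : l) (j : m) (a b : ℝ) :
    ∫ s in a..b, F' s i j = F b i j - F a i j := by
  let π := LinearMap.toContinuousLinearMap (Matrix.entryLinearMap ℝ ℂ i j)
  exact intervalIntegral.integral_eq_sub_of_hasDerivAt (f := fun s => F s i j)
    (fun s _ => (π.hasFDerivAt (x := F s)).comp_hasDerivAt s (hF s))
    ((π.continuous.comp hF').intervalIntegrable a b)

end Calculus

lemma intSigma_eq_sub_heisenberg (H ω : Matrix (Fin n) (Fin n) ℂ) (t : ℝ) :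
    intSigma H ω t = mlog ω - heisenberg H t (mlog ω) := by
  ext i j
  have h := intervalIntegral_apply_eq_sub (hasDerivAt_heisenberg_mlog H ω)
    (continuous_heisenberg H _).neg i j 0 t
  simp only [Matrix.neg_apply, intervalIntegral.integral_neg, heisenberg_zero] at h
  rw [intSigma, Matrix.of_apply, Matrix.sub_apply]
  linear_combination -h

end

theorem stmt0_general {n : ℕ} (H ω : Matrix (Fin n) (Fin n) ℂ)
    (hH : H.IsHermitian) :
    (∀ t : ℝ, mlog (stateT H ω t)
        = mlog ω + mexp ((-(Complex.I * t)) • H) * intSigma H ω t * mexp ((Complex.I * t) • H)) ∧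
    (∀ t : ℝ, t ≠ 0 → mlog (stateT H ω t)
        = mlog ω + (t : ℂ) • heisenberg H (-t) (meanSigma H ω t)) := by
  have hlog : ∀ t : ℝ, mlog (stateT H ω t) = mlog ω + heisenberg H (-t) (intSigma H ω t) := by
    intro t
    rw [intSigma_eq_sub_heisenberg, heisenberg_sub, heisenberg_heisenberg, neg_add_cancel,
      heisenberg_zero, stateT_eq_heisenberg, mlog_heisenberg hH]
    abel
  refine ⟨fun t => by rw [hlog, heisenberg_neg], fun t ht => ?_⟩
  rw [hlog, meanSigma, heisenberg_smul, smul_smul, mul_inv_cancel₀ (by exact_mod_cast ht),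
    one_smul]

/-- `log ω_t = log ω + e^{-itH} (∫₀^t σ_s ds) e^{itH}`; equivalently for `t ≠ 0`,
`log ω_t = log ω + t τ^{-t}(Σ^t)`. -/
theorem stmt0 {n : ℕ} (H ω : Matrix (Fin n) (Fin n) ℂ)
    (hH : H.IsHermitian) (hω : ω.PosDef) (htr : ω.trace = 1) :
    (∀ t : ℝ, mlog (stateT H ω t)
        = mlog ω + mexp ((-(Complex.I * t)) • H) * intSigma H ω t * mexp ((Complex.I * t) • H)) ∧
    (∀ t : ℝ, t ≠ 0 → mlog (stateT H ω t)
        = mlog ω + (t : ℂ) • heisenberg H (-t) (meanSigma H ω t)) :=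
  stmt0_general H ω hH
end

section
/- If for every t ∈ ℝ the matrices e^{itH}·ω·e^{-itH} and ω commute, then H and ω commute. -/
open Matrix MeasureTheory Filter Topology
open scoped ComplexOrder

/-!
Differentiating `t ↦ e^{itH} ω e^{-itH}` at `t = 0` shows that `K = Hω - ωH` commutes with `ω`.
Since `K` is skew-Hermitian, `tr (Kᴴ K) = -tr (K (Hω - ωH)) = -tr ((ωK - Kω) H) = 0`, hence `K = 0`.
-/

open NormedSpace

section ExpConj

variable {𝔸 : Type*} [NormedRing 𝔸] [NormedAlgebra ℝ 𝔸] [CompleteSpace 𝔸]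

theorem hasDerivAt_exp_smul_mul_mul_exp_neg_smul (A B : 𝔸) :
    HasDerivAt (fun t : ℝ => exp (t • A) * B * exp (t • -A)) (A * B - B * A) 0 := by
  have h := ((hasDerivAt_exp_smul_const A (0 : ℝ)).mul_const B).mul
    (hasDerivAt_exp_smul_const (-A) (0 : ℝ))
  simpa only [Pi.mul_def, zero_smul, exp_zero, one_mul, mul_one, mul_neg, ← sub_eq_add_neg] using h

theorem commute_commutator_of_forall_commute_exp_conj {A B : 𝔸}
    (h : ∀ t : ℝ, Commute (exp (t • A) * B * exp (t • -A)) B) :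
    Commute (A * B - B * A) B := by
  have hF := hasDerivAt_exp_smul_mul_mul_exp_neg_smul A B
  have hderiv : HasDerivAt (fun t : ℝ => exp (t • A) * B * exp (t • -A) * B -
      B * (exp (t • A) * B * exp (t • -A))) ((A * B - B * A) * B - B * (A * B - B * A)) 0 :=
    (hF.mul_const B).sub (hF.const_mul B)
  simp only [fun t => (h t).eq, sub_self] at hderiv
  exact sub_eq_zero.mp (hderiv.unique (hasDerivAt_const 0 0))

end ExpConj

theorem Matrix.IsHermitian.commute_of_commute_commutator {m 𝕜 : Type*} [Fintype m] [RCLike 𝕜]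
    {H ω : Matrix m m 𝕜} (hH : H.IsHermitian) (hω : ω.IsHermitian)
    (h : Commute (H * ω - ω * H) ω) : Commute H ω := by
  set K := H * ω - ω * H with hK
  have hK_skew : Kᴴ = -K := by
    rw [hK, conjTranspose_sub, conjTranspose_mul, conjTranspose_mul, hH.eq, hω.eq, neg_sub]
  have htrace : (K * K).trace = 0 := by
    calc (K * K).trace = (K * H * ω).trace - (K * ω * H).trace := by
          rw [hK, mul_sub, trace_sub, mul_assoc, mul_assoc]
      _ = 0 := by rw [h.eq, trace_mul_cycle, sub_self]
  have : K = 0 := trace_conjTranspose_mul_self_eq_zero_iff.mp <| by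
    rw [hK_skew, neg_mul, trace_neg, htrace, neg_zero]
  exact sub_eq_zero.mp this

/-- if `e^{itH} ω e^{-itH}` commutes with `ω` for every `t`, then `H` and `ω`
commute. -/
theorem stmt6 {n : ℕ} (H ω : Matrix (Fin n) (Fin n) ℂ)
    (hH : H.IsHermitian) (hω : ω.PosDef)
    (hcomm : ∀ t : ℝ,
      (mexp ((Complex.I * t) • H) * ω * mexp ((-(Complex.I * t)) • H)) * ω
        = ω * (mexp ((Complex.I * t) • H) * ω * mexp ((-(Complex.I * t)) • H))) :
    H * ω = ω * H := by
  -- any Banach-algebra norm will do: `exp` depends only on the topology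
  let : NormedRing (Matrix (Fin n) (Fin n) ℂ) := Matrix.linftyOpNormedRing
  let : NormedAlgebra ℝ (Matrix (Fin n) (Fin n) ℂ) := Matrix.linftyOpNormedAlgebra
  have hsmul (t : ℝ) : (Complex.I * t) • H = t • (Complex.I • H) := by
    rw [← Complex.coe_smul, smul_smul, mul_comm]
  have hexp (t : ℝ) :
      Commute (exp (t • (Complex.I • H)) * ω * exp (t • -(Complex.I • H))) ω := by
    simpa only [Commute, SemiconjBy, mexp, hsmul, neg_smul, smul_neg] using hcomm t
  have hcommutator := commute_commutator_of_forall_commute_exp_conj hexp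
  rw [smul_mul_assoc, mul_smul_comm, ← smul_sub,
    Commute.smul_left_iff₀ Complex.I_ne_zero] at hcommutator
  exact (hH.commute_of_commute_commutator hω.isHermitian hcommutator).eq
end

section
/- Let λ ∈ ℝ, r > 0, and let f(z) = Σ_{n≥0} c_n·(z-λ)^n be a power series with complex coefficients converging absolutely for |z-λ| < r. Let δ > 0 and let F : (-δ,δ) → {Hermitian n×n complex matrices} be differentiable at 0 with derivative F'(0), and suppose every eigenvalue of F(0) lies in the open interval (λ-r, λ+r). Define tr f(F(α)) := Σ_{n≥0} c_n·tr((F(α) - λ·I)^n) (this series converges absolutely for all α sufficiently close to 0). Then the function α ↦ tr f(F(α)) is differentiable at α = 0 with derivative tr( f'(F(0))·F'(0) ), where f'(F(0)) := Σ_{n≥1} n·c_n·(F(0) - λ·I)^{n-1}. -/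
open Matrix MeasureTheory Filter Topology
open scoped ComplexOrder

attribute [local instance] Matrix.normedAddCommGroup Matrix.normedSpace

/-! Put `G = F 0 - λ • 1` and view matrices as operators on `EuclideanSpace ℂ (Fin n)`, whose
operator norm (unlike the entrywise sup norm) is submultiplicative. Since `G` is self-adjoint, its
operator norm is its spectral radius `max |μᵢ - λ| < r`. Hence on an operator-norm ball around
`F 0` the terms `c_m tr((X - λ)^m)` have derivatives `H ↦ m c_m tr((X - λ)^(m-1) H)` (by
cyclicity of the trace) with summable bounds `m ‖c_m‖ ρ^(m-1)`, so the series may be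
differentiated termwise, and the chain rule along `F` gives the formula. -/

open Asymptotics

section PowerSeries

variable {𝕜 𝔸 : Type*} [RCLike 𝕜] [NormedRing 𝔸] [NormedAlgebra 𝕜 𝔸]

theorem summable_norm_succ_mul_mul_pow {c : ℕ → 𝕜} {r : ℝ}
    (hconv : ∀ ρ : ℝ, 0 ≤ ρ → ρ < r → Summable fun m : ℕ => ‖c m‖ * ρ ^ m)
    (ρ : ℝ) (hρ : 0 ≤ ρ) (hρr : ρ < r) :
    Summable fun m : ℕ => ‖((m + 1 : ℕ) : 𝕜) * c (m + 1)‖ * ρ ^ m := by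
  obtain ⟨ρ', hρρ', hρ'r⟩ := exists_between hρr
  have hρ' : 0 < ρ' := hρ.trans_lt hρρ'
  have hnorm : ‖ρ‖ < ρ' := by rwa [Real.norm_of_nonneg hρ]
  have hgrowth : (fun m : ℕ => ((m : ℝ) + 1) * ρ ^ m) =O[atTop] fun m => ρ' ^ m := by
    simpa [add_mul] using
      ((isLittleO_pow_const_mul_const_pow_const_pow_of_norm_lt 1 hnorm).add
        (isLittleO_pow_const_mul_const_pow_const_pow_of_norm_lt 0 hnorm)).isBigO
  have hshift : Summable fun m : ℕ => ‖c (m + 1)‖ * ρ' ^ m := by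
    refine (((summable_nat_add_iff 1).mpr (hconv ρ' hρ'.le hρ'r)).mul_left ρ'⁻¹).congr
      fun m => ?_
    field_simp
    ring
  refine summable_of_isBigO_nat hshift
    (((isBigO_refl (fun m => ‖c (m + 1)‖) atTop).mul hgrowth).congr_left fun m => ?_)
  rw [norm_mul, RCLike.norm_natCast]
  push_cast
  ring

theorem norm_pow_mul_le (b h : 𝔸) (k : ℕ) : ‖b ^ k * h‖ ≤ ‖b‖ ^ k * ‖h‖ := by
  induction k generalizing h with
  | zero => simp
  | succ k ih =>
    calc ‖b ^ (k + 1) * h‖ = ‖b ^ k * (b * h)‖ := by rw [pow_succ, mul_assoc]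
    _ ≤ ‖b‖ ^ k * ‖b * h‖ := ih _
    _ ≤ ‖b‖ ^ (k + 1) * ‖h‖ := by
        rw [pow_succ, mul_assoc]; gcongr; exact norm_mul_le _ _

theorem summable_smul_pow [CompleteSpace 𝔸] {c : ℕ → 𝕜} {r : ℝ}
    (hconv : ∀ ρ : ℝ, 0 ≤ ρ → ρ < r → Summable fun m : ℕ => ‖c m‖ * ρ ^ m) {b : 𝔸}
    (hb : ‖b‖ < r) : Summable fun m => c m • b ^ m := by
  refine .of_norm_bounded ((hconv _ (norm_nonneg _) hb).mul_right ‖(1 : 𝔸)‖) fun m => ?_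
  rw [norm_smul, mul_assoc]
  gcongr
  simpa using norm_pow_mul_le b 1 m

variable (τ : 𝔸 →L[𝕜] 𝕜)

theorem norm_comp_mul_pow_le (b : 𝔸) (k : ℕ) :
    ‖τ.comp (ContinuousLinearMap.mul 𝕜 𝔸 (b ^ k))‖ ≤ ‖τ‖ * ‖b‖ ^ k :=
  ContinuousLinearMap.opNorm_le_bound _ (by positivity) fun h =>
    (τ.le_opNorm _).trans <| by
      rw [mul_assoc]; gcongr; exact norm_pow_mul_le b h k

variable (htr : ∀ a b, τ (a * b) = τ (b * a))
include htr

theorem hasFDerivAt_trace_pow_sub (m : ℕ) (z a : 𝔸) :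
    HasFDerivAt (fun x => τ ((x - z) ^ m))
      ((m : 𝕜) • τ.comp (ContinuousLinearMap.mul 𝕜 𝔸 ((a - z) ^ (m - 1)))) a := by
  refine (τ.hasFDerivAt.comp a ((hasFDerivAt_pow' m).comp a
    ((hasFDerivAt_id a).sub_const z))).congr_fderiv ?_
  ext h
  have hcyc : ∀ i ∈ Finset.range m,
      τ ((a - z) ^ (m - 1 - i) * h * (a - z) ^ i) = τ ((a - z) ^ (m - 1) * h) := by
    intro i hi
    rw [htr, ← mul_assoc, ← pow_add, Nat.add_sub_cancel' (by grind)]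
  simp [Finset.sum_congr rfl hcyc]

theorem hasFDerivAt_tsum_trace_pow_sub [CompleteSpace 𝔸] {c : ℕ → 𝕜} {r : ℝ}
    (hconv : ∀ ρ : ℝ, 0 ≤ ρ → ρ < r → Summable fun m : ℕ => ‖c m‖ * ρ ^ m) {z a : 𝔸}
    (ha : ‖a - z‖ < r) :
    HasFDerivAt (fun x => ∑' m, c m * τ ((x - z) ^ m))
      (τ.comp (ContinuousLinearMap.mul 𝕜 𝔸
        (∑' m : ℕ, (((m + 1 : ℕ) : 𝕜) * c (m + 1)) • (a - z) ^ m))) a := by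
  obtain ⟨ρ, haρ, hρr⟩ := exists_between ha
  have ha_mem : a ∈ Metric.ball z ρ := by rwa [Metric.mem_ball, dist_eq_norm]
  set L : 𝔸 →L[𝕜] 𝔸 →L[𝕜] 𝕜 :=
    (ContinuousLinearMap.compL 𝕜 𝔸 𝔸 𝕜 τ).comp (ContinuousLinearMap.mul 𝕜 𝔸)
  set w : ℕ → 𝔸 → 𝔸 := fun m x => ((m : 𝕜) * c m) • (x - z) ^ (m - 1)
  have hterm : ∀ m x, HasFDerivAt (fun x => c m * τ ((x - z) ^ m)) (L (w m x)) x := by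
    intro m x
    refine ((hasFDerivAt_trace_pow_sub τ htr m z x).const_mul (c m)).congr_fderiv ?_
    ext h
    simp [L, w]
    ring
  have hterm_bound : ∀ m, ∀ x ∈ Metric.ball z ρ,
      ‖L (w m x)‖ ≤ ‖τ‖ * (‖(m : 𝕜) * c m‖ * ρ ^ (m - 1)) := by
    intro m x hx
    rw [Metric.mem_ball, dist_eq_norm] at hx
    calc ‖L (w m x)‖ = ‖(m : 𝕜) * c m‖ * ‖L ((x - z) ^ (m - 1))‖ := by
          simp only [w, map_smul, norm_smul]
    _ ≤ ‖(m : 𝕜) * c m‖ * (‖τ‖ * ρ ^ (m - 1)) := by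
          gcongr; exact (norm_comp_mul_pow_le τ _ _).trans (by gcongr)
    _ = _ := by ring
  have hbound_summable : Summable fun m : ℕ => ‖τ‖ * (‖(m : 𝕜) * c m‖ * ρ ^ (m - 1)) := by
    refine (summable_nat_add_iff 1).mp ?_
    simpa using (summable_norm_succ_mul_mul_pow hconv ρ ((norm_nonneg _).trans haρ.le)
      hρr).mul_left ‖τ‖
  have hsummable_at : Summable fun m => c m * τ ((a - z) ^ m) := by
    simpa using (summable_smul_pow hconv ha).mapL τ
  have hderiv_summable : Summable fun m : ℕ => w (m + 1) a := by
    simpa [w] using summable_smul_pow (summable_norm_succ_mul_mul_pow hconv) ha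
  have hpre : IsPreconnected (Metric.ball z ρ) := by
    let _ : NormedSpace ℝ 𝔸 := NormedSpace.restrictScalars ℝ 𝕜 𝔸
    exact (convex_ball z ρ).isPreconnected
  refine (hasFDerivAt_tsum_of_isPreconnected hbound_summable Metric.isOpen_ball hpre
    (fun m x _ => hterm m x) hterm_bound ha_mem hsummable_at ha_mem).congr_fderiv ?_
  have hw : Summable fun m => w m a := by
    rw [← summable_nat_add_iff 1]; exact hderiv_summable
  rw [← L.map_tsum hw, hw.tsum_eq_zero_add]
  simp [w]
  rfl

end PowerSeries

theorem IsSelfAdjoint.norm_lt_of_forall_mem_spectrum {A : Type*} [CStarAlgebra A] {a : A}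
    (ha : IsSelfAdjoint a) {r : ℝ} (hr : 0 < r) (h : ∀ z ∈ spectrum ℂ a, ‖z‖ < r) :
    ‖a‖ < r := by
  rcases (spectrum ℂ a).eq_empty_or_nonempty with hempty | hne
  · have : ‖a‖₊ = 0 := by
      simpa [spectralRadius, hempty] using ha.spectralRadius_eq_nnnorm.symm
    simpa [← coe_nnnorm, this] using hr
  · obtain ⟨z, hz, hz_eq⟩ := spectrum.exists_nnnorm_eq_spectralRadius_of_nonempty hne
    rw [ha.spectralRadius_eq_nnnorm, ENNReal.coe_inj] at hz_eq
    rw [← coe_nnnorm, ← hz_eq, coe_nnnorm]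
    exact h z hz

section MatrixTrace

variable {ι : Type*} [Fintype ι] [DecidableEq ι]

theorem Matrix.IsHermitian.norm_toEuclideanCLM_sub_smul_one_lt {A : Matrix ι ι ℂ} (hA : A.IsHermitian)
    {lam r : ℝ} (hr : 0 < r) (h : ∀ i, hA.eigenvalues i ∈ Set.Ioo (lam - r) (lam + r)) :
    ‖toEuclideanCLM (n := ι) (𝕜 := ℂ) (A - (lam : ℂ) • 1)‖ < r := by
  have hsa : IsSelfAdjoint (toEuclideanCLM (n := ι) (𝕜 := ℂ) (A - (lam : ℂ) • 1)) := by
    refine (hA.isSelfAdjoint.sub ?_).map _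
    simp [IsSelfAdjoint, star_smul]
  refine hsa.norm_lt_of_forall_mem_spectrum hr fun z hz => ?_
  rw [AlgEquiv.spectrum_eq, ← Algebra.algebraMap_eq_smul_one, ← spectrum.sub_singleton_eq,
    hA.spectrum_eq_image_range] at hz
  obtain ⟨_, ⟨_, ⟨i, rfl⟩, rfl⟩, _, rfl, rfl⟩ := hz
  have hi := h i
  rw [Set.mem_Ioo] at hi
  dsimp only
  rw [RCLike.ofReal_eq_complex_ofReal, ← Complex.ofReal_sub, Complex.norm_real, Real.norm_eq_abs,
    abs_sub_lt_iff]
  constructor <;> linarith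

theorem HasDerivWithinAt.tsum_trace_pow_sub {c : ℕ → ℂ} {r : ℝ}
    (hconv : ∀ ρ : ℝ, 0 ≤ ρ → ρ < r → Summable fun m : ℕ => ‖c m‖ * ρ ^ m)
    {F : ℝ → Matrix ι ι ℂ} {F' Z : Matrix ι ι ℂ} {s : Set ℝ} {t : ℝ}
    (hF : HasDerivWithinAt F F' s t) (hFZ : ‖toEuclideanCLM (n := ι) (𝕜 := ℂ) (F t - Z)‖ < r) :
    HasDerivWithinAt (fun t => ∑' m, c m * trace ((F t - Z) ^ m))
      (trace ((∑' m : ℕ, (((m + 1 : ℕ) : ℂ) * c (m + 1)) • (F t - Z) ^ m) * F')) s t := by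
  let Φ : Matrix ι ι ℂ ≃L[ℂ] (EuclideanSpace ℂ ι →L[ℂ] EuclideanSpace ℂ ι) :=
    (toEuclideanCLM (n := ι) (𝕜 := ℂ)).toAlgEquiv.toLinearEquiv.toContinuousLinearEquiv
  have hΦ_mul : ∀ X Y, Φ (X * Y) = Φ X * Φ Y := map_mul (toEuclideanCLM (n := ι) (𝕜 := ℂ))
  have hΦ_pow : ∀ X (m : ℕ), Φ (X ^ m) = Φ X ^ m := map_pow (toEuclideanCLM (n := ι) (𝕜 := ℂ))
  have hΦ_symm_mul : ∀ a b, Φ.symm (a * b) = Φ.symm a * Φ.symm b :=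
    map_mul (toEuclideanCLM (n := ι) (𝕜 := ℂ)).symm
  let τ : (EuclideanSpace ℂ ι →L[ℂ] EuclideanSpace ℂ ι) →L[ℂ] ℂ :=
    (traceLinearMap ι ℂ ℂ).toContinuousLinearMap.comp Φ.symm.toContinuousLinearMap
  have htr : ∀ a b, τ (a * b) = τ (b * a) := fun a b => by
    simp [τ, hΦ_symm_mul, trace_mul_comm (Φ.symm a)]
  have hg := hasFDerivAt_tsum_trace_pow_sub τ htr hconv (z := Φ Z) (a := Φ (F t))
    (by rwa [← map_sub])
  have hΦF : HasDerivWithinAt (fun t => Φ (F t)) (Φ F') s t :=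
    (Φ.toContinuousLinearMap.restrictScalars ℝ).hasFDerivAt.comp_hasDerivWithinAt t hF
  have hfun : (fun t => ∑' m, c m * trace ((F t - Z) ^ m)) =
      (fun x => ∑' m, c m * τ ((x - Φ Z) ^ m)) ∘ fun t => Φ (F t) := by
    funext t
    simp [τ, ← map_sub, ← hΦ_pow]
  rw [hfun]
  refine ((hg.restrictScalars ℝ).comp_hasDerivWithinAt t hΦF).congr_deriv ?_
  have hS : ∑' m : ℕ, (((m + 1 : ℕ) : ℂ) * c (m + 1)) • (Φ (F t) - Φ Z) ^ m =
      Φ (∑' m : ℕ, (((m + 1 : ℕ) : ℂ) * c (m + 1)) • (F t - Z) ^ m) := by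
    simp [Φ.map_tsum, ← map_sub, hΦ_pow]
  change τ (_ * Φ F') = _
  rw [hS, ← hΦ_mul]
  simp [τ]

end MatrixTrace

theorem stmt13_general {n : ℕ} (lam r : ℝ) (hr : 0 < r) (c : ℕ → ℂ)
    (hconv : ∀ ρ : ℝ, 0 ≤ ρ → ρ < r → Summable fun m : ℕ => ‖c m‖ * ρ ^ m)
    (δ : ℝ)
    (F : ℝ → Matrix (Fin n) (Fin n) ℂ) (F'0 : Matrix (Fin n) (Fin n) ℂ)
    (hF0 : (F 0).IsHermitian)
    (hFd : HasDerivWithinAt F F'0 (Set.Ioo (-δ) δ) 0)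
    (heig : ∀ i, hF0.eigenvalues i ∈ Set.Ioo (lam - r) (lam + r)) :
    HasDerivWithinAt
      (fun α => ∑' m : ℕ, c m * Matrix.trace ((F α - (lam : ℂ) • 1) ^ m))
      (Matrix.trace
        ((∑' m : ℕ, (((m + 1 : ℕ) : ℂ) * c (m + 1)) • (F 0 - (lam : ℂ) • 1) ^ m) * F'0))
      (Set.Ioo (-δ) δ) 0 :=
  hFd.tsum_trace_pow_sub hconv (hF0.norm_toEuclideanCLM_sub_smul_one_lt hr heig)

/-- differentiability of `α ↦ tr f(F(α))` for an analytic `f` given by a power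
series around `λ` with radius of absolute convergence `r`, and a Hermitian-matrix-valued
function `F` on `(-δ,δ)` differentiable at `0` whose eigenvalues at `0` lie in `(λ-r, λ+r)`. -/
theorem stmt13 {n : ℕ} (lam r : ℝ) (hr : 0 < r) (c : ℕ → ℂ)
    (hconv : ∀ ρ : ℝ, 0 ≤ ρ → ρ < r → Summable fun m : ℕ => ‖c m‖ * ρ ^ m)
    (δ : ℝ) (hδ : 0 < δ)
    (F : ℝ → Matrix (Fin n) (Fin n) ℂ) (F'0 : Matrix (Fin n) (Fin n) ℂ)
    (hherm : ∀ α ∈ Set.Ioo (-δ) δ, (F α).IsHermitian)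
    (hF0 : (F 0).IsHermitian)
    (hFd : HasDerivWithinAt F F'0 (Set.Ioo (-δ) δ) 0)
    (heig : ∀ i, hF0.eigenvalues i ∈ Set.Ioo (lam - r) (lam + r)) :
    HasDerivWithinAt
      (fun α => ∑' m : ℕ, c m * Matrix.trace ((F α - (lam : ℂ) • 1) ^ m))
      (Matrix.trace
        ((∑' m : ℕ, (((m + 1 : ℕ) : ℂ) * c (m + 1)) • (F 0 - (lam : ℂ) • 1) ^ m) * F'0))
      (Set.Ioo (-δ) δ) 0 :=
  stmt13_general lam r hr c hconv δ F F'0 hF0 hFd heig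
end

section
/- Let X be a complex Banach space, let (h_M)_{M∈ℕ} be a sequence of bounded linear operators on X and let h be a bounded linear operator on X such that sup_M ‖h_M‖ < ∞ and h_M ψ → h ψ as M → ∞ for every ψ ∈ X (strong convergence). Then for every ψ ∈ X and every T > 0, sup_{t ∈ [-T,T]} ‖ exp(i t h_M) ψ - exp(i t h) ψ ‖ → 0 as M → ∞. -/
/-!
Expand `exp (z • A) x = ∑ zⁿ / n! • Aⁿ x`. A uniform bound `‖Aᵢ‖ ≤ K` lets strong convergence
pass to every power `Aᵢⁿ`, and dominates the `n`-th term of the difference series by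
`2 ‖x‖ (r K)ⁿ / n!` for `‖z‖ ≤ r`. Uniform convergence on a set `s` is convergence along the
product filter `l ×ˢ 𝓟 s`, so Tannery's theorem along that filter gives the claim.
-/

open Filter Topology
open scoped Nat

theorem tendstoUniformlyOn_iff_tendsto_sub {ι α G : Type*} [UniformSpace G] [AddGroup G]
    [IsRightUniformAddGroup G]
    {F : ι → α → G} {f : α → G} {p : Filter ι} {s : Set α} :
    TendstoUniformlyOn F f p s ↔
      Tendsto (fun q : ι × α => F q.1 q.2 - f q.2) (p ×ˢ 𝓟 s) (𝓝 0) := by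
  rw [tendstoUniformlyOn_iff_tendsto, uniformity_eq_comap_nhds_zero G, tendsto_comap_iff]
  rfl

theorem norm_pow_div_factorial_smul_le {𝕜 E : Type*} [RCLike 𝕜] [SeminormedAddCommGroup E]
    [NormedSpace 𝕜 E] {z : 𝕜} {r : ℝ} (hz : ‖z‖ ≤ r) (n : ℕ) (v : E) :
    ‖(z ^ n / n !) • v‖ ≤ r ^ n / n ! * ‖v‖ := by
  rw [norm_smul, norm_div, norm_pow, RCLike.norm_natCast]
  gcongr

namespace ContinuousLinearMap

section NormedField

variable {𝕜 E : Type*} [NontriviallyNormedField 𝕜] [NormedAddCommGroup E] [NormedSpace 𝕜 E]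
  {ι : Type*} {l : Filter ι} {A : ι → E →L[𝕜] E} {B : E →L[𝕜] E} {K : ℝ}

theorem norm_pow_apply_le_of_norm_le (hB : ‖B‖ ≤ K) (x : E) (n : ℕ) :
    ‖(B ^ n) x‖ ≤ K ^ n * ‖x‖ := by
  induction n with
  | zero => simp
  | succ n ih =>
    calc ‖(B ^ (n + 1)) x‖ = ‖B ((B ^ n) x)‖ := by rw [pow_succ', mul_apply_eq_comp]
      _ ≤ ‖B‖ * ‖(B ^ n) x‖ := B.le_opNorm _
      _ ≤ K * (K ^ n * ‖x‖) := mul_le_mul hB ih (norm_nonneg _) ((norm_nonneg B).trans hB)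
      _ = K ^ (n + 1) * ‖x‖ := by ring

theorem tendsto_apply_of_tendsto_of_norm_le (hA : ∀ i, ‖A i‖ ≤ K)
    (hAB : ∀ x, Tendsto (fun i => A i x) l (𝓝 (B x))) {y : ι → E} {x : E}
    (hy : Tendsto y l (𝓝 x)) : Tendsto (fun i => A i (y i)) l (𝓝 (B x)) := by
  rw [tendsto_iff_norm_sub_tendsto_zero] at hy ⊢
  have hAx := tendsto_iff_norm_sub_tendsto_zero.1 (hAB x)
  refine squeeze_zero (fun _ => norm_nonneg _) (fun i => ?_)
    (by simpa using (hy.const_mul K).add hAx)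
  calc ‖A i (y i) - B x‖ = ‖A i (y i - x) + (A i x - B x)‖ := by rw [map_sub, sub_add_sub_cancel]
    _ ≤ ‖A i‖ * ‖y i - x‖ + ‖A i x - B x‖ :=
      (norm_add_le _ _).trans (add_le_add_left ((A i).le_opNorm _) _)
    _ ≤ K * ‖y i - x‖ + ‖A i x - B x‖ := by gcongr; exact hA i

theorem tendsto_pow_apply_of_tendsto_apply (hA : ∀ i, ‖A i‖ ≤ K)
    (hAB : ∀ x, Tendsto (fun i => A i x) l (𝓝 (B x))) (x : E) (n : ℕ) :
    Tendsto (fun i => (A i ^ n) x) l (𝓝 ((B ^ n) x)) := by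
  induction n with
  | zero => simpa using tendsto_const_nhds
  | succ n ih =>
    simpa only [pow_succ', mul_apply_eq_comp] using tendsto_apply_of_tendsto_of_norm_le hA hAB ih

end NormedField

section RCLike

variable {𝕜 E : Type*} [RCLike 𝕜] [NormedAddCommGroup E] [NormedSpace 𝕜 E] [CompleteSpace E]
  {ι : Type*} {l : Filter ι} {A : ι → E →L[𝕜] E} {B : E →L[𝕜] E} {K : ℝ}

theorem hasSum_exp_smul_apply (B : E →L[𝕜] E) (z : 𝕜) (x : E) :
    HasSum (fun n : ℕ => (z ^ n / n !) • (B ^ n) x) (NormedSpace.exp (z • B) x) := by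
  have := (NormedSpace.exp_series_hasSum_exp' (𝕂 := 𝕜) (z • B)).mapL (apply 𝕜 E x)
  simp only [apply_apply, smul_pow] at this
  convert this using 2 with n
  rw [smul_smul, smul_apply, div_eq_inv_mul]

theorem tendstoUniformlyOn_exp_smul_apply (hA : ∀ i, ‖A i‖ ≤ K) (hB : ‖B‖ ≤ K)
    (hAB : ∀ x, Tendsto (fun i => A i x) l (𝓝 (B x))) (x : E) (r : ℝ) :
    TendstoUniformlyOn (fun i z => NormedSpace.exp (z • A i) x)
      (fun z => NormedSpace.exp (z • B) x) l (Metric.closedBall (0 : 𝕜) r) := by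
  have hsum (i : ι) (z : 𝕜) : HasSum (fun n : ℕ => (z ^ n / n !) • ((A i ^ n) x - (B ^ n) x))
      (NormedSpace.exp (z • A i) x - NormedSpace.exp (z • B) x) := by
    simpa only [smul_sub] using (hasSum_exp_smul_apply (A i) z x).sub (hasSum_exp_smul_apply B z x)
  have hball : ∀ᶠ q in l ×ˢ 𝓟 (Metric.closedBall (0 : 𝕜) r), ‖q.2‖ ≤ r :=
    (eventually_principal.2 fun z hz => mem_closedBall_zero_iff.1 hz).prod_inr l
  have hdiff : Tendsto (fun q : ι × 𝕜 => ∑' n : ℕ, (q.2 ^ n / n !) • ((A q.1 ^ n) x - (B ^ n) x))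
      (l ×ˢ 𝓟 (Metric.closedBall (0 : 𝕜) r)) (𝓝 (∑' _ : ℕ, (0 : E))) := by
    refine tendsto_tsum_of_dominated_convergence (𝓕 := l ×ˢ 𝓟 (Metric.closedBall (0 : 𝕜) r))
      (f := fun (q : ι × 𝕜) (n : ℕ) => (q.2 ^ n / n !) • ((A q.1 ^ n) x - (B ^ n) x))
      (g := fun _ => (0 : E)) (bound := fun n => (r * K) ^ n / n ! * (2 * ‖x‖))
      ((Real.summable_pow_div_factorial (r * K)).mul_right _) (fun n => ?_) ?_
    · have hn := tendsto_iff_norm_sub_tendsto_zero.1 (tendsto_pow_apply_of_tendsto_apply hA hAB x n)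
      refine squeeze_zero_norm' ?_ (by simpa only [Function.comp_def, mul_zero] using
        (hn.comp tendsto_fst).const_mul (r ^ n / n !))
      filter_upwards [hball] with q hq using norm_pow_div_factorial_smul_le hq n _
    · filter_upwards [hball] with q hq n
      have hr : 0 ≤ r := (norm_nonneg _).trans hq
      calc ‖(q.2 ^ n / n !) • ((A q.1 ^ n) x - (B ^ n) x)‖
          ≤ r ^ n / n ! * ‖(A q.1 ^ n) x - (B ^ n) x‖ := norm_pow_div_factorial_smul_le hq n _
        _ ≤ r ^ n / n ! * (K ^ n * ‖x‖ + K ^ n * ‖x‖) := by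
          gcongr
          exact (norm_sub_le _ _).trans (add_le_add (norm_pow_apply_le_of_norm_le (hA q.1) x n)
            (norm_pow_apply_le_of_norm_le hB x n))
        _ = (r * K) ^ n / n ! * (2 * ‖x‖) := by ring
  rw [tsum_zero] at hdiff
  exact tendstoUniformlyOn_iff_tendsto_sub.2 (hdiff.congr fun q => (hsum q.1 q.2).tsum_eq)

end RCLike

end ContinuousLinearMap

theorem stmt18_general {X : Type*} [NormedAddCommGroup X] [NormedSpace ℂ X] [CompleteSpace X]
    (hM : ℕ → X →L[ℂ] X) (h : X →L[ℂ] X)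
    (hbd : ∃ C : ℝ, ∀ M : ℕ, ‖hM M‖ ≤ C)
    (hstrong : ∀ ψ : X, Tendsto (fun M => hM M ψ) atTop (nhds (h ψ)))
    (ψ : X) (T : ℝ) :
    TendstoUniformlyOn
      (fun (M : ℕ) (t : ℝ) => NormedSpace.exp ((Complex.I * (t : ℂ)) • hM M) ψ)
      (fun t : ℝ => NormedSpace.exp ((Complex.I * (t : ℂ)) • h) ψ)
      atTop (Set.Icc (-T) T) := by
  obtain ⟨C, hC⟩ := hbd
  have hexp := ContinuousLinearMap.tendstoUniformlyOn_exp_smul_apply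
    (fun M => (hC M).trans (le_max_left C ‖h‖)) (le_max_right C ‖h‖) hstrong ψ T
  refine (hexp.comp fun t : ℝ => Complex.I * t).mono fun t ht => ?_
  simpa [abs_le] using ht

/-- if `(h_M)` is a uniformly bounded sequence of bounded operators on a Banach
space converging strongly to `h`, then `e^{ith_M}ψ → e^{ith}ψ` uniformly for `t` in compact
intervals. -/
theorem stmt18 {X : Type*} [NormedAddCommGroup X] [NormedSpace ℂ X] [CompleteSpace X]
    (hM : ℕ → X →L[ℂ] X) (h : X →L[ℂ] X)
    (hbd : ∃ C : ℝ, ∀ M : ℕ, ‖hM M‖ ≤ C)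
    (hstrong : ∀ ψ : X, Tendsto (fun M => hM M ψ) atTop (nhds (h ψ)))
    (ψ : X) (T : ℝ) (hT : 0 < T) :
    TendstoUniformlyOn
      (fun (M : ℕ) (t : ℝ) => NormedSpace.exp ((Complex.I * (t : ℂ)) • hM M) ψ)
      (fun t : ℝ => NormedSpace.exp ((Complex.I * (t : ℂ)) • h) ψ)
      atTop (Set.Icc (-T) T) :=
  stmt18_general hM h hbd hstrong ψ T
end

section
/- For all Hermitian 2×2 complex matrices X and Y: det(I + e^{X/2}·e^{Y}·e^{X/2}) ≥ det(I + e^{X+Y}) (both determinants are positive reals), and equality holds if and only if X·Y = Y·X. -/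
open Matrix MeasureTheory Filter Topology
open scoped ComplexOrder

/-!
For 2×2 matrices `det (1 + A) = 1 + tr A + det A`, and both `e^{X/2} e^Y e^{X/2}` and `e^{X+Y}`
have determinant `e^{tr X + tr Y}`, so the theorem is the 2×2 Golden–Thompson inequality
`tr e^{X+Y} ≤ tr (e^X e^Y)` together with its equality case.

Write `X = U diag(d) U*`, `Y = V diag(e) V*` and `t = |(U*V)₀₁|²`. Then
`tr (e^X e^Y) = (1-t)(e^{d₀+e₀} + e^{d₁+e₁}) + t(e^{d₀+e₁} + e^{d₁+e₀})`, while the eigenvalues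
`m₀, m₁` of `X + Y` are determined by `tr (X+Y)` and `tr (X+Y)²`. Centring everything at
`s = (m₀+m₁)/2`, the inequality becomes `cosh r ≤ (1-t) cosh (α+β) + t cosh (α-β)` with
`r² = (1-t)(α+β)² + t(α-β)²`, which is convexity of `x ↦ cosh √x`. Strict convexity forces
`t ∈ {0, 1}` or `αβ = 0` in the case of equality, and each of these makes `X` and `Y` commute.
-/

open Unitary

namespace Real

lemma sinh_lt_mul_cosh {r : ℝ} (hr : 0 < r) : sinh r < r * cosh r := by
  have hmono : StrictMonoOn (fun x : ℝ => x * cosh x - sinh x) (Set.Ici 0) := by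
    refine strictMonoOn_of_deriv_pos (convex_Ici 0) (by fun_prop) fun x hx => ?_
    rw [interior_Ici, Set.mem_Ioi] at hx
    have hderiv : HasDerivAt (fun x : ℝ => x * cosh x - sinh x)
        (1 * cosh x + x * sinh x - cosh x) x :=
      ((hasDerivAt_id x).mul (hasDerivAt_cosh x)).sub (hasDerivAt_sinh x)
    rw [hderiv.deriv, one_mul, add_sub_cancel_left]
    exact mul_pos hx (sinh_pos_iff.2 hx)
  simpa using hmono Set.self_mem_Ici hr.le hr

lemma strictConvexOn_cosh_sqrt : StrictConvexOn ℝ (Set.Ici 0) (fun x : ℝ => cosh √x) := by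
  refine strictConvexOn_of_deriv2_pos (convex_Ici 0) (by fun_prop) fun x hx => ?_
  rw [interior_Ici, Set.mem_Ioi] at hx
  have hs : 0 < √x := sqrt_pos.2 hx
  have hderiv : ∀ y : ℝ, 0 < y → HasDerivAt (fun y : ℝ => cosh √y) (sinh √y * (2 * √y)⁻¹) y :=
    fun y hy => by
      simpa [one_div, Function.comp_def] using
        (hasDerivAt_cosh √y).comp y (hasDerivAt_sqrt hy.ne')
  have hderiv2 : HasDerivAt (fun y : ℝ => sinh √y * (2 * √y)⁻¹)
      (cosh √x * (1 / (2 * √x)) * (2 * √x)⁻¹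
        + sinh √x * (-(2 * (1 / (2 * √x))) / (2 * √x) ^ 2)) x :=
    ((hasDerivAt_sinh √x).comp x (hasDerivAt_sqrt hx.ne')).mul
      (((hasDerivAt_sqrt hx.ne').const_mul 2).inv (by positivity))
  have hderiv_eq : deriv (fun y : ℝ => cosh √y) =ᶠ[𝓝 x] fun y => sinh √y * (2 * √y)⁻¹ := by
    filter_upwards [eventually_gt_nhds hx] with y hy using (hderiv y hy).deriv
  rw [Function.iterate_succ_apply, Function.iterate_one, hderiv_eq.deriv_eq, hderiv2.deriv]
  have hform : cosh √x * (1 / (2 * √x)) * (2 * √x)⁻¹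
        + sinh √x * (-(2 * (1 / (2 * √x))) / (2 * √x) ^ 2)
      = (√x * cosh √x - sinh √x) / (4 * √x ^ 3) := by
    field_simp
    ring
  rw [hform]
  exact div_pos (by linarith [sinh_lt_mul_cosh hs]) (by positivity)

lemma cosh_sqrt_sq (x : ℝ) : cosh √(x ^ 2) = cosh x := by
  rw [sqrt_sq_eq_abs, cosh_abs]

lemma cosh_le_convexComb_of_sq_eq {a b r t : ℝ} (ht0 : 0 ≤ t) (ht1 : t ≤ 1)
    (hr : r ^ 2 = (1 - t) * a ^ 2 + t * b ^ 2) :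
    cosh r ≤ (1 - t) * cosh a + t * cosh b := by
  have := strictConvexOn_cosh_sqrt.convexOn.2 (sq_nonneg a) (sq_nonneg b) (sub_nonneg.2 ht1) ht0
    (sub_add_cancel 1 t)
  simpa only [smul_eq_mul, ← hr, cosh_sqrt_sq] using this

lemma eq_zero_or_eq_one_or_sq_eq_of_cosh_eq_convexComb {a b r t : ℝ} (ht0 : 0 ≤ t) (ht1 : t ≤ 1)
    (hr : r ^ 2 = (1 - t) * a ^ 2 + t * b ^ 2) (h : cosh r = (1 - t) * cosh a + t * cosh b) :
    t = 0 ∨ t = 1 ∨ a ^ 2 = b ^ 2 := by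
  by_contra! hne
  obtain ⟨ht0', ht1', hab⟩ := hne
  have := strictConvexOn_cosh_sqrt.2 (sq_nonneg a) (sq_nonneg b) hab
    (sub_pos.2 (lt_of_le_of_ne ht1 ht1')) (lt_of_le_of_ne ht0 (Ne.symm ht0')) (sub_add_cancel 1 t)
  simp only [smul_eq_mul, ← hr, cosh_sqrt_sq] at this
  exact this.ne h

lemma exp_add_add_exp_sub (s a : ℝ) : exp (s + a) + exp (s - a) = 2 * exp s * cosh a := by
  rw [cosh_eq, exp_add, exp_sub, exp_neg]
  ring

end Real

/-- `∑ i j, a i * b j * ‖W i j‖²` for a 2×2 unitary `W` with `‖W 0 1‖² = t`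
(see `trace_conj_diagonal_mul_conj_diagonal_fin_two`). -/
def overlapSum (t : ℝ) (a b : Fin 2 → ℝ) : ℝ :=
  (1 - t) * (a 0 * b 0 + a 1 * b 1) + t * (a 0 * b 1 + a 1 * b 0)

open Real in
lemma exp_add_exp_le_overlapSum {d e m : Fin 2 → ℝ} {t : ℝ} (ht0 : 0 ≤ t) (ht1 : t ≤ 1)
    (hsum : m 0 + m 1 = d 0 + d 1 + (e 0 + e 1))
    (hsq : m 0 ^ 2 + m 1 ^ 2 = d 0 ^ 2 + d 1 ^ 2 + (e 0 ^ 2 + e 1 ^ 2) + 2 * overlapSum t d e) :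
    exp (m 0) + exp (m 1) ≤ overlapSum t (exp ∘ d) (exp ∘ e) ∧
      (exp (m 0) + exp (m 1) = overlapSum t (exp ∘ d) (exp ∘ e) →
        t = 0 ∨ t = 1 ∨ d 0 = d 1 ∨ e 0 = e 1) := by
  set s := (m 0 + m 1) / 2 with hs_def
  set r := (m 0 - m 1) / 2 with hr_def
  set α := (d 0 - d 1) / 2 with hα_def
  set β := (e 0 - e 1) / 2 with hβ_def
  have hr : r ^ 2 = (1 - t) * (α + β) ^ 2 + t * (α - β) ^ 2 := by
    unfold overlapSum at hsq
    linear_combination hsq / 2 - ((m 0 + m 1 + d 0 + d 1 + e 0 + e 1) / 4) * hsum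
  have hlhs : exp (m 0) + exp (m 1) = 2 * exp s * cosh r := by
    rw [← exp_add_add_exp_sub, hs_def, hr_def]
    ring_nf
  have hrhs : overlapSum t (exp ∘ d) (exp ∘ e)
      = 2 * exp s * ((1 - t) * cosh (α + β) + t * cosh (α - β)) := by
    have h₀₀ : d 0 + e 0 = s + (α + β) := by linear_combination -hsum / 2
    have h₁₁ : d 1 + e 1 = s - (α + β) := by linear_combination -hsum / 2
    have h₀₁ : d 0 + e 1 = s + (α - β) := by linear_combination -hsum / 2
    have h₁₀ : d 1 + e 0 = s - (α - β) := by linear_combination -hsum / 2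
    simp only [overlapSum, Function.comp_apply, ← exp_add]
    rw [h₀₀, h₁₁, h₀₁, h₁₀, exp_add_add_exp_sub, exp_add_add_exp_sub]
    ring
  have hs : 0 < 2 * exp s := by positivity
  rw [hlhs, hrhs, mul_le_mul_iff_right₀ hs, mul_right_inj' hs.ne']
  refine ⟨cosh_le_convexComb_of_sq_eq ht0 ht1 hr, fun h => ?_⟩
  obtain ht | ht | hαβ := eq_zero_or_eq_one_or_sq_eq_of_cosh_eq_convexComb ht0 ht1 hr h
  · exact Or.inl ht
  · exact Or.inr (Or.inl ht)
  · obtain hα | hβ := mul_eq_zero.1 (show α * β = 0 by linear_combination hαβ / 4)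
    · exact Or.inr (Or.inr (Or.inl (by linarith)))
    · exact Or.inr (Or.inr (Or.inr (by linarith)))

lemma commute_diagonal_iff {ι R : Type*} [Fintype ι] [DecidableEq ι] [CommRing R] (a : ι → R)
    (M : Matrix ι ι R) : Commute (diagonal a) M ↔ ∀ i j, (a i - a j) * M i j = 0 := by
  simp only [Commute, SemiconjBy, ← Matrix.ext_iff, diagonal_mul, mul_diagonal, sub_mul,
    sub_eq_zero]
  exact forall₂_congr fun i j => by rw [mul_comm (M i j)]

lemma det_one_add_fin_two {R : Type*} [CommRing R] (A : Matrix (Fin 2) (Fin 2) R) :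
    det (1 + A) = 1 + trace A + det A := by
  simp only [det_fin_two, trace_fin_two, Matrix.add_apply, one_apply_eq,
    one_apply_ne zero_ne_one, one_apply_ne one_ne_zero, zero_add]
  ring

section Unitary

variable {ι : Type*} [Fintype ι] [DecidableEq ι]

lemma sum_normSq_row_of_unitary (W : unitaryGroup ι ℂ) (i : ι) :
    ∑ j, Complex.normSq (W i j) = 1 := by
  have h := congrFun (congrFun (Unitary.coe_mul_star_self W) i) i
  simp only [mul_apply, Unitary.coe_star, star_apply, RCLike.star_def, Complex.mul_conj,
    one_apply_eq] at h
  exact_mod_cast h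

lemma sum_normSq_col_of_unitary (W : unitaryGroup ι ℂ) (j : ι) :
    ∑ i, Complex.normSq (W i j) = 1 := by
  have h := congrFun (congrFun (Unitary.coe_star_mul_self W) j) j
  simp only [mul_apply, star_apply, RCLike.star_def, ← Complex.normSq_eq_conj_mul_self,
    one_apply_eq] at h
  exact_mod_cast h

lemma normSq_apply_le_one_of_unitary (W : unitaryGroup ι ℂ) (i j : ι) :
    Complex.normSq (W i j) ≤ 1 := by
  rw [← sum_normSq_row_of_unitary W i]
  exact Finset.single_le_sum (fun k _ => Complex.normSq_nonneg _) (Finset.mem_univ j)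

lemma trace_conjStarAlgAut (U : unitaryGroup ι ℂ) (M : Matrix ι ι ℂ) :
    trace (conjStarAlgAut ℂ _ U M) = trace M := by
  rw [conjStarAlgAut_apply, trace_mul_cycle, Unitary.coe_star_mul_self, one_mul]

lemma det_conjStarAlgAut (U : unitaryGroup ι ℂ) (M : Matrix ι ι ℂ) :
    det (conjStarAlgAut ℂ _ U M) = det M := by
  rw [conjStarAlgAut_apply, det_mul_comm, ← mul_assoc, Unitary.coe_star_mul_self, one_mul]

lemma trace_conjStarAlgAut_diagonal (U : unitaryGroup ι ℂ) (a : ι → ℂ) :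
    trace (conjStarAlgAut ℂ _ U (diagonal a)) = ∑ i, a i := by
  rw [trace_conjStarAlgAut, trace_diagonal]

lemma trace_diagonal_mul_conj_diagonal (W : unitaryGroup ι ℂ) (a b : ι → ℂ) :
    trace (diagonal a * conjStarAlgAut ℂ _ W (diagonal b))
      = ∑ i, ∑ j, a i * b j * Complex.normSq (W i j) := by
  simp only [conjStarAlgAut_apply, trace, diag, diagonal_mul]
  simp only [mul_apply, Finset.mul_sum]
  refine Finset.sum_congr rfl fun i _ => Finset.sum_congr rfl fun j _ => ?_
  simp only [diagonal_apply, mul_ite, mul_zero, Finset.sum_ite_eq', Finset.mem_univ,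
    if_true, star_apply, RCLike.star_def, Complex.normSq_eq_conj_mul_self]
  ring

lemma trace_conj_diagonal_mul_conj_diagonal (U V : unitaryGroup ι ℂ) (a b : ι → ℂ) :
    trace (conjStarAlgAut ℂ _ U (diagonal a) * conjStarAlgAut ℂ _ V (diagonal b))
      = ∑ i, ∑ j, a i * b j * Complex.normSq ((star U * V : unitaryGroup ι ℂ) i j) := by
  have hV : V = U * (star U * V) := by rw [← mul_assoc, Unitary.mul_star_self, one_mul]
  conv_lhs => rw [hV, conjStarAlgAut_mul_apply, ← map_mul, trace_conjStarAlgAut]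
  exact trace_diagonal_mul_conj_diagonal _ a b

end Unitary

section FinTwo

lemma normSq_unitary_fin_two (W : unitaryGroup (Fin 2) ℂ) :
    Complex.normSq (W 0 0) = 1 - Complex.normSq (W 0 1) ∧
      Complex.normSq (W 1 1) = 1 - Complex.normSq (W 0 1) ∧
      Complex.normSq (W 1 0) = Complex.normSq (W 0 1) := by
  have r0 := sum_normSq_row_of_unitary W 0
  have c0 := sum_normSq_col_of_unitary W 0
  have c1 := sum_normSq_col_of_unitary W 1
  simp only [Fin.sum_univ_two] at r0 c0 c1
  refine ⟨by linarith, by linarith, by linarith⟩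

lemma trace_conj_diagonal_mul_conj_diagonal_fin_two (U V : unitaryGroup (Fin 2) ℂ)
    (a b : Fin 2 → ℝ) :
    trace (conjStarAlgAut ℂ _ U (diagonal fun i => (a i : ℂ)) *
        conjStarAlgAut ℂ _ V (diagonal fun i => (b i : ℂ)))
      = overlapSum (Complex.normSq ((star U * V : unitaryGroup (Fin 2) ℂ) 0 1)) a b := by
  obtain ⟨h₀₀, h₁₁, h₁₀⟩ := normSq_unitary_fin_two (star U * V)
  rw [trace_conj_diagonal_mul_conj_diagonal, overlapSum]
  simp only [Fin.sum_univ_two, h₀₀, h₁₁, h₁₀]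
  push_cast
  ring

lemma conj_diagonal_apply_zero_one (W : unitaryGroup (Fin 2) ℂ) (b : Fin 2 → ℂ) :
    conjStarAlgAut ℂ _ W (diagonal b) 0 1 = (b 0 - b 1) * (W 0 0 * star (W 1 0)) := by
  have h := congrFun (congrFun (Unitary.coe_mul_star_self W) 0) 1
  simp only [mul_apply, Fin.sum_univ_two, Unitary.coe_star, star_apply,
    one_apply_ne zero_ne_one] at h
  rw [conjStarAlgAut_apply, mul_apply]
  simp only [mul_diagonal, Fin.sum_univ_two, star_apply]
  linear_combination b 1 * h

lemma conj_diagonal_apply_one_zero (W : unitaryGroup (Fin 2) ℂ) (b : Fin 2 → ℂ) :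
    conjStarAlgAut ℂ _ W (diagonal b) 1 0 = (b 0 - b 1) * (W 1 0 * star (W 0 0)) := by
  have h := congrFun (congrFun (Unitary.coe_mul_star_self W) 1) 0
  simp only [mul_apply, Fin.sum_univ_two, Unitary.coe_star, star_apply,
    one_apply_ne one_ne_zero] at h
  rw [conjStarAlgAut_apply, mul_apply]
  simp only [mul_diagonal, Fin.sum_univ_two, star_apply]
  linear_combination b 1 * h

lemma commute_conj_diagonal_fin_two (U V : unitaryGroup (Fin 2) ℂ) (a b : Fin 2 → ℂ)
    (h : Complex.normSq ((star U * V : unitaryGroup (Fin 2) ℂ) 0 1) = 0 ∨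
      Complex.normSq ((star U * V : unitaryGroup (Fin 2) ℂ) 0 1) = 1 ∨ a 0 = a 1 ∨ b 0 = b 1) :
    Commute (conjStarAlgAut ℂ _ U (diagonal a)) (conjStarAlgAut ℂ _ V (diagonal b)) := by
  set W := star U * V
  have hV : V = U * W := by rw [← mul_assoc, Unitary.mul_star_self, one_mul]
  rw [hV, conjStarAlgAut_mul_apply]
  refine Commute.map ?_ _
  obtain ⟨h₀₀, -, h₁₀⟩ := normSq_unitary_fin_two W
  have hvanish : a 0 = a 1 ∨ b 0 = b 1 ∨ W 0 0 = 0 ∨ W 1 0 = 0 := by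
    rcases h with ht | ht | hab | hab
    · exact Or.inr (Or.inr (Or.inr (Complex.normSq_eq_zero.1 (h₁₀.trans ht))))
    · exact Or.inr (Or.inr (Or.inl (Complex.normSq_eq_zero.1 (by rw [h₀₀, ht, sub_self]))))
    · exact Or.inl hab
    · exact Or.inr (Or.inl hab)
  rw [commute_diagonal_iff]
  intro i j
  fin_cases i <;> fin_cases j <;>
    simp only [sub_self, zero_mul, Fin.zero_eta, Fin.mk_one, conj_diagonal_apply_zero_one,
      conj_diagonal_apply_one_zero] <;>
    rcases hvanish with h | h | h | h <;> simp [h]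

end FinTwo

lemma mexp_conjStarAlgAut_diagonal {n : ℕ} (U : unitaryGroup (Fin n) ℂ) (a : Fin n → ℂ) :
    mexp (conjStarAlgAut ℂ _ U (diagonal a))
      = conjStarAlgAut ℂ _ U (diagonal fun i => Complex.exp (a i)) := by
  have hinv : (star U : Matrix (Fin n) (Fin n) ℂ) = (U : Matrix (Fin n) (Fin n) ℂ)⁻¹ :=
    (inv_eq_right_inv (Unitary.coe_mul_star_self U)).symm
  rw [conjStarAlgAut_apply, conjStarAlgAut_apply, hinv, mexp, exp_conj _ _ Unitary.isUnit_coe,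
    exp_diagonal]
  congr
  funext i
  simp [Complex.exp_eq_exp_ℂ]

lemma mexp_half_mul_mexp_half {n : ℕ} (X : Matrix (Fin n) (Fin n) ℂ) :
    mexp ((1/2 : ℝ) • X) * mexp ((1/2 : ℝ) • X) = mexp X := by
  rw [mexp, mexp, ← exp_add_of_commute _ _ (Commute.refl _), ← add_smul]
  norm_num

lemma trace_mexp_half_mul_mexp_mul_mexp_half {n : ℕ} (X Y : Matrix (Fin n) (Fin n) ℂ) :
    trace (mexp ((1/2 : ℝ) • X) * mexp Y * mexp ((1/2 : ℝ) • X)) = trace (mexp X * mexp Y) := by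
  rw [trace_mul_cycle, mexp_half_mul_mexp_half]

namespace Matrix.IsHermitian

variable {n : ℕ} {A : Matrix (Fin n) (Fin n) ℂ}

lemma eq_conj_diagonal (hA : A.IsHermitian) :
    A = conjStarAlgAut ℂ _ hA.eigenvectorUnitary (diagonal fun i => (hA.eigenvalues i : ℂ)) :=
  hA.spectral_theorem

lemma mexp_eq (hA : A.IsHermitian) :
    mexp A = conjStarAlgAut ℂ _ hA.eigenvectorUnitary
      (diagonal fun i => (Real.exp (hA.eigenvalues i) : ℂ)) := by
  conv_lhs => rw [hA.eq_conj_diagonal]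
  rw [mexp_conjStarAlgAut_diagonal]
  simp only [Complex.ofReal_exp]

lemma trace_mexp (hA : A.IsHermitian) :
    trace (mexp A) = ((∑ i, Real.exp (hA.eigenvalues i) : ℝ) : ℂ) := by
  rw [hA.mexp_eq, trace_conjStarAlgAut_diagonal]
  push_cast
  rfl

lemma det_mexp (hA : A.IsHermitian) : det (mexp A) = Complex.exp (trace A) := by
  rw [hA.mexp_eq, det_conjStarAlgAut, det_diagonal, hA.trace_eq_sum_eigenvalues, Complex.exp_sum]
  simp

lemma trace_mul_self (hA : A.IsHermitian) :
    trace (A * A) = ((∑ i, hA.eigenvalues i ^ 2 : ℝ) : ℂ) := by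
  conv_lhs => rw [hA.eq_conj_diagonal, ← map_mul, diagonal_mul_diagonal,
    trace_conjStarAlgAut_diagonal]
  push_cast
  simp only [sq]

lemma sum_eigenvalues_add {B : Matrix (Fin n) (Fin n) ℂ} (hA : A.IsHermitian)
    (hB : B.IsHermitian) :
    ∑ i, (hA.add hB).eigenvalues i = ∑ i, hA.eigenvalues i + ∑ i, hB.eigenvalues i := by
  have h := trace_add A B
  rw [(hA.add hB).trace_eq_sum_eigenvalues, hA.trace_eq_sum_eigenvalues,
    hB.trace_eq_sum_eigenvalues] at h
  exact_mod_cast h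

lemma sum_sq_eigenvalues_add {B : Matrix (Fin n) (Fin n) ℂ} (hA : A.IsHermitian)
    (hB : B.IsHermitian) :
    ((∑ i, (hA.add hB).eigenvalues i ^ 2 : ℝ) : ℂ)
      = ((∑ i, hA.eigenvalues i ^ 2 : ℝ) : ℂ) + ((∑ i, hB.eigenvalues i ^ 2 : ℝ) : ℂ)
        + 2 * trace (A * B) := by
  rw [← (hA.add hB).trace_mul_self, ← hA.trace_mul_self, ← hB.trace_mul_self]
  simp only [add_mul, mul_add, trace_add]
  rw [trace_mul_comm B A]
  ring

lemma trace_mexp_pos [NeZero n] (hA : A.IsHermitian) : 0 < trace (mexp A) := by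
  rw [hA.trace_mexp, Complex.zero_lt_real]
  exact Finset.sum_pos (fun i _ => Real.exp_pos _) Finset.univ_nonempty

lemma det_mexp_pos (hA : A.IsHermitian) : 0 < det (mexp A) := by
  have h : det (mexp A) = (Real.exp (∑ i, hA.eigenvalues i) : ℂ) := by
    rw [hA.det_mexp, hA.trace_eq_sum_eigenvalues, Complex.ofReal_exp]
    push_cast
    rfl
  rw [h, Complex.zero_lt_real]
  exact Real.exp_pos _

lemma det_mexp_half_mul_mexp_mul_mexp_half {B : Matrix (Fin n) (Fin n) ℂ} (hA : A.IsHermitian)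
    (hB : B.IsHermitian) :
    det (mexp ((1/2 : ℝ) • A) * mexp B * mexp ((1/2 : ℝ) • A)) = det (mexp (A + B)) := by
  rw [det_mul, det_mul, mul_right_comm, ← det_mul, mexp_half_mul_mexp_half, hA.det_mexp,
    hB.det_mexp, (hA.add hB).det_mexp, trace_add, Complex.exp_add]

end Matrix.IsHermitian

theorem trace_mexp_add_le_fin_two {X Y : Matrix (Fin 2) (Fin 2) ℂ} (hX : X.IsHermitian)
    (hY : Y.IsHermitian) :
    trace (mexp (X + Y)) ≤ trace (mexp X * mexp Y) ∧
      (trace (mexp X * mexp Y) = trace (mexp (X + Y)) ↔ Commute X Y) := by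
  set d := hX.eigenvalues
  set e := hY.eigenvalues
  set m := (hX.add hY).eigenvalues
  set W := star hX.eigenvectorUnitary * hY.eigenvectorUnitary
  set t := Complex.normSq (W 0 1)
  have hsum : m 0 + m 1 = d 0 + d 1 + (e 0 + e 1) := by
    simpa only [Fin.sum_univ_two] using hX.sum_eigenvalues_add hY
  have hsq : m 0 ^ 2 + m 1 ^ 2
      = d 0 ^ 2 + d 1 ^ 2 + (e 0 ^ 2 + e 1 ^ 2) + 2 * overlapSum t d e := by
    have htrXY : trace (X * Y) = overlapSum t d e := by
      conv_lhs => rw [hX.eq_conj_diagonal, hY.eq_conj_diagonal]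
      exact trace_conj_diagonal_mul_conj_diagonal_fin_two _ _ d e
    have h := hX.sum_sq_eigenvalues_add hY
    rw [htrXY, Fin.sum_univ_two, Fin.sum_univ_two, Fin.sum_univ_two] at h
    exact_mod_cast h
  obtain ⟨hle, heq⟩ := exp_add_exp_le_overlapSum (Complex.normSq_nonneg _)
    (normSq_apply_le_one_of_unitary W 0 1) hsum hsq
  have htrA : trace (mexp X * mexp Y) = overlapSum t (Real.exp ∘ d) (Real.exp ∘ e) := by
    rw [hX.mexp_eq, hY.mexp_eq]
    exact trace_conj_diagonal_mul_conj_diagonal_fin_two _ _ (Real.exp ∘ d) (Real.exp ∘ e)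
  have htrB : trace (mexp (X + Y)) = ((Real.exp (m 0) + Real.exp (m 1) : ℝ) : ℂ) := by
    rw [(hX.add hY).trace_mexp, Fin.sum_univ_two]
  refine ⟨by rw [htrA, htrB]; exact_mod_cast hle, fun h => ?_, fun h => ?_⟩
  · rw [htrA, htrB, Complex.ofReal_inj] at h
    rw [hX.eq_conj_diagonal, hY.eq_conj_diagonal]
    exact commute_conj_diagonal_fin_two _ _ _ _
      (by simpa only [Complex.ofReal_inj] using heq h.symm)
  · rw [mexp, mexp, mexp, exp_add_of_commute X Y h]

/-- Golden–Thompson-type determinant inequality for 2×2 Hermitian matrices: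
both `det(I + e^{X/2} e^{Y} e^{X/2})` and `det(I + e^{X+Y})` are positive reals,
`det(I + e^{X+Y}) ≤ det(I + e^{X/2} e^{Y} e^{X/2})`, with equality iff `XY = YX`. -/
theorem stmt19 (X Y : Matrix (Fin 2) (Fin 2) ℂ)
    (hX : X.IsHermitian) (hY : Y.IsHermitian) :
    0 < (Matrix.det (1 + mexp ((1/2 : ℝ) • X) * mexp Y * mexp ((1/2 : ℝ) • X))).re ∧
    (Matrix.det (1 + mexp ((1/2 : ℝ) • X) * mexp Y * mexp ((1/2 : ℝ) • X))).im = 0 ∧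
    0 < (Matrix.det (1 + mexp (X + Y))).re ∧
    (Matrix.det (1 + mexp (X + Y))).im = 0 ∧
    (Matrix.det (1 + mexp (X + Y))).re
      ≤ (Matrix.det (1 + mexp ((1/2 : ℝ) • X) * mexp Y * mexp ((1/2 : ℝ) • X))).re ∧
    ((Matrix.det (1 + mexp ((1/2 : ℝ) • X) * mexp Y * mexp ((1/2 : ℝ) • X))).re
        = (Matrix.det (1 + mexp (X + Y))).re ↔ X * Y = Y * X) := by
  have htr := trace_mexp_half_mul_mexp_mul_mexp_half X Y
  have hdet := hX.det_mexp_half_mul_mexp_mul_mexp_half hY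
  set P := mexp ((1/2 : ℝ) • X)
  obtain ⟨hle, hiff⟩ := trace_mexp_add_le_fin_two hX hY
  have hB : 0 < det (1 + mexp (X + Y)) := by
    rw [det_one_add_fin_two]
    exact add_pos (add_pos one_pos (hX.add hY).trace_mexp_pos) (hX.add hY).det_mexp_pos
  have hBA : det (1 + mexp (X + Y)) ≤ det (1 + P * mexp Y * P) := by
    rw [det_one_add_fin_two, det_one_add_fin_two, htr, hdet]
    gcongr
  have hA := hB.trans_le hBA
  have heq : det (1 + P * mexp Y * P) = det (1 + mexp (X + Y)) ↔ X * Y = Y * X := by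
    rw [det_one_add_fin_two, det_one_add_fin_two, htr, hdet, add_left_inj, add_right_inj]
    exact hiff
  rw [Complex.pos_iff] at hA hB
  rw [Complex.le_def] at hBA
  refine ⟨hA.1, hA.2.symm, hB.1, hB.2.symm, hBA.1, ?_⟩
  rw [← heq, Complex.ext_iff, ← hA.2, ← hB.2]
  simp
end
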